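/- Let X₁, X₂ and Y be Banach spaces, let X = X₁ ⊕_1 X₂, and let T : X → Y be a bounded linear operator. If T is a narrow operator, then the restrictions T₁ and T₂ of T to X₁ and X₂ are narrow operators. -/

import Mathlib

/-- A bounded linear operator `T : X → Y` is *narrow* if for every `x, y` in the unit
sphere of `X`, every continuous linear functional `f` on `X` and every `ε > 0` there is
`z` in the unit sphere with `‖x + z‖ ≥ 2 - ε` and `‖T (y - z)‖ + |f (y - z)| ≤ ε`. -/
def IsNarrow {X Y : Type*} [NormedAddCommGroup X] [NormedSpace ℝ X]
    [NormedAddCommGroup Y] [NormedSpace ℝ Y] (T : X →L[ℝ] Y) : Prop :=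
  ∀ x y : X, ‖x‖ = 1 → ‖y‖ = 1 → ∀ f : X →L[ℝ] ℝ, ∀ ε : ℝ, 0 < ε →
    ∃ z : X, ‖z‖ = 1 ∧ 2 - ε ≤ ‖x + z‖ ∧ ‖T (y - z)‖ + |f (y - z)| ≤ ε

/-!
`X₁` sits in `X₁ ⊕₁ X₂` as an L-summand: `‖u‖ = ‖π u‖ + ‖u - J (π u)‖` for the canonical
embedding `J` and projection `π`. Given `x, y ∈ S(X₁)` and a functional `f`, apply the narrowness
of `T` to `J x, J y` with the functional `(c • g ± f) ∘ π`, where `g` norms `y` and `c` is large: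
the `g`-term forces the witness to lie within `δ` of `J X₁`, and leaves a one-sided bound
`± f (y - π z) ≤ δ`. Doing this twice, the second time starting from the normalisation of
`J x + z`, produces two witnesses almost normed by one common functional, so the whole segment
between them stays almost diametral to `J x`; a point of the segment where `f (y - π w)` is
small projects to an almost-unit vector of `X₁` that works for `T ∘ J`.
-/

theorem IsPreconnected.exists_abs_le {α : Type*} [TopologicalSpace α] {s : Set α}
    (hs : IsPreconnected s) {φ : α → ℝ} (hφ : ContinuousOn φ s) {a b : α} (ha : a ∈ s)
    (hb : b ∈ s) {δ : ℝ} (hδ : 0 ≤ δ) (hφa : φ a ≤ δ) (hφb : -δ ≤ φ b) :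
    ∃ w ∈ s, |φ w| ≤ δ := by
  by_cases h : -δ ≤ φ a
  · exact ⟨a, ha, abs_le.2 ⟨h, hφa⟩⟩
  · obtain ⟨w, hw, hφw⟩ := hs.intermediate_value ha hb hφ ⟨(not_le.1 h).le, hφb⟩
    exact ⟨w, hw, by rw [hφw, abs_neg, abs_of_nonneg hδ]⟩

theorem le_and_le_of_abs_mul_add_le {a b c δ : ℝ} (hδ : 0 < δ) (ha : 0 ≤ a) (hb : |b| ≤ c)
    (h : |(1 + c / δ) * a + b| ≤ δ) : a ≤ δ ∧ b ≤ δ := by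
  have hc : 0 ≤ c := (abs_nonneg b).trans hb
  have hk : (1 + c / δ) * δ = δ + c := by field_simp
  have hka : 0 ≤ (1 + c / δ) * a := mul_nonneg (by positivity) ha
  have h' := (le_abs_self _).trans h
  refine ⟨le_of_mul_le_mul_left ?_ (by positivity : 0 < 1 + c / δ), by linarith⟩
  linarith [(le_abs_self b).trans hb, neg_abs_le b]

section Normed

variable {X Y : Type*} [NormedAddCommGroup X] [NormedSpace ℝ X]
    [NormedAddCommGroup Y] [NormedSpace ℝ Y]

theorem ContinuousLinearMap.norm_map_sub_le_add (L : X →L[ℝ] Y) (y v z : X) :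
    ‖L (y - z)‖ ≤ ‖L (y - v)‖ + ‖L‖ * ‖v - z‖ := by
  rw [← sub_add_sub_cancel y v z, map_add]
  exact (norm_add_le _ _).trans (add_le_add_right (L.le_opNorm _) _)

theorem StrongDual.apply_le_norm {h : StrongDual ℝ X} (hh : ‖h‖ ≤ 1) (u : X) : h u ≤ ‖u‖ :=
  (le_abs_self _).trans <| (h.le_of_opNorm_le hh u).trans_eq (one_mul _)

theorem norm_inv_norm_smul_sub (v : X) (hv : v ≠ 0) : ‖‖v‖⁻¹ • v - v‖ = |1 - ‖v‖| := by
  have hv' : ‖v‖ ≠ 0 := norm_ne_zero_iff.2 hv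
  calc ‖‖v‖⁻¹ • v - v‖ = |‖v‖⁻¹ - 1| * ‖v‖ := by
        rw [← Real.norm_eq_abs, ← norm_smul, sub_smul, one_smul]
    _ = |1 - ‖v‖| := by
        rw [← abs_norm v, ← abs_mul, abs_norm, sub_mul, inv_mul_cancel₀ hv', one_mul]

end Normed

section Narrow

variable {X Y : Type*} [NormedAddCommGroup X] [NormedSpace ℝ X]
    [NormedAddCommGroup Y] [NormedSpace ℝ Y]

theorem isNarrow_of_norm_le_one (T : X →L[ℝ] Y)
    (h : ∀ x y : X, ‖x‖ = 1 → ‖y‖ = 1 → ∀ f : StrongDual ℝ X, ∀ ε : ℝ, 0 < ε → ε ≤ 1 →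
      ∃ v : X, ‖v‖ ≤ 1 ∧ 2 - ε ≤ ‖x + v‖ ∧ ‖T (y - v)‖ + |f (y - v)| ≤ ε) :
    IsNarrow T := by
  intro x y hx hy f ε hε
  set C := 2 + ‖T‖ + ‖f‖
  have hC : 2 ≤ C := by simp only [C]; linarith [norm_nonneg T, norm_nonneg f]
  set η := min ε 1 / C
  have hη : 0 < η := by positivity
  have hηC : η * C = min ε 1 := div_mul_cancel₀ _ (by positivity)
  have hηε : η * C ≤ ε := hηC.trans_le (min_le_left _ _)
  have hη1 : η * 2 ≤ 1 := by nlinarith [min_le_right ε 1]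
  have hη2 : η * 2 ≤ ε := by nlinarith
  obtain ⟨v, hv1, hxv, hTv⟩ := h x y hx hy f η hη (by linarith)
  have hv : 1 - η ≤ ‖v‖ := by linarith [norm_add_le x v]
  have hv0 : v ≠ 0 := norm_pos_iff.1 (by linarith)
  have hvz : ‖v - ‖v‖⁻¹ • v‖ ≤ η := by
    rw [norm_sub_rev, norm_inv_norm_smul_sub v hv0, abs_of_nonneg (by linarith)]
    linarith
  refine ⟨‖v‖⁻¹ • v, norm_smul_inv_norm hv0, ?_, ?_⟩
  · have := norm_add_le (x + ‖v‖⁻¹ • v) (v - ‖v‖⁻¹ • v)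
    rw [add_add_sub_cancel] at this
    linarith
  · have hT := T.norm_map_sub_le_add y v (‖v‖⁻¹ • v)
    have hf := f.norm_map_sub_le_add y v (‖v‖⁻¹ • v)
    rw [Real.norm_eq_abs, Real.norm_eq_abs] at hf
    nlinarith [norm_nonneg T, norm_nonneg f]

theorem IsNarrow.exists_segment {T : X →L[ℝ] Y} (hT : IsNarrow T) {x y : X} (hx : ‖x‖ = 1)
    (hy : ‖y‖ = 1) (f g : StrongDual ℝ X) {δ : ℝ} (hδ : 0 < δ) (hδ1 : δ ≤ 1) :
    ∃ z z' : X, ‖z‖ = 1 ∧ ‖z'‖ = 1 ∧ |f (y - z)| ≤ δ ∧ |g (y - z')| ≤ δ ∧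
      ∀ w ∈ segment ℝ z z', 2 - 4 * δ ≤ ‖x + w‖ ∧ ‖T (y - w)‖ ≤ δ := by
  obtain ⟨z, hz, hxz, hTz⟩ := hT x y hx hy f δ hδ
  have hxz0 : x + z ≠ 0 := norm_pos_iff.1 (by linarith)
  set r := ‖x + z‖
  set x' := r⁻¹ • (x + z)
  have hx' : ‖x'‖ = 1 := norm_smul_inv_norm hxz0
  obtain ⟨z', hz', hxz', hTz'⟩ := hT x' y hx' hy g δ hδ
  -- `h` almost norms `x'` and `z'`, hence also `x + z = r • x'`, hence `x` and `z` separately.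
  obtain ⟨h, hh, hhxz'⟩ := exists_dual_vector'' ℝ (x' + z')
  rw [RCLike.ofReal_real_eq_id, id] at hhxz'
  have hle := StrongDual.apply_le_norm hh
  have hhx' : 1 - δ ≤ h x' := by
    linarith [map_add h x' z', hle z']
  have hhz' : 1 - δ ≤ h z' := by
    linarith [map_add h x' z', hle x']
  have hhxz : 2 - 3 * δ ≤ h x + h z := by
    have : h x + h z = r * h x' := by
      rw [← map_add, map_smul, smul_eq_mul, mul_inv_cancel_left₀ (by positivity)]
    nlinarith
  have hhx : 1 - 3 * δ ≤ h x := by linarith [hle z]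
  refine ⟨z, z', hz, hz', by linarith [norm_nonneg (T (y - z))],
    by linarith [norm_nonneg (T (y - z'))], fun w hw => ⟨?_, ?_⟩⟩
  · have hS : Convex ℝ {u | 2 - 4 * δ - h x ≤ h u} :=
      convex_halfSpace_ge h.toLinearMap.isLinear _
    have : 2 - 4 * δ - h x ≤ h w := hS.segment_subset
      (show 2 - 4 * δ - h x ≤ h z by linarith) (show 2 - 4 * δ - h x ≤ h z' by linarith) hw
    linarith [hle (x + w), map_add h x w]
  · have hS : Convex ℝ (T ⁻¹' Metric.closedBall (T y) δ) :=
      (convex_closedBall _ _).linear_preimage T.toLinearMap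
    have hball : ∀ u, u ∈ T ⁻¹' Metric.closedBall (T y) δ ↔ ‖T (y - u)‖ ≤ δ := fun u => by
      rw [Set.mem_preimage, Metric.mem_closedBall, dist_comm, dist_eq_norm, ← map_sub]
    refine (hball w).1 (hS.segment_subset ((hball z).2 ?_) ((hball z').2 ?_) hw)
    · linarith [abs_nonneg (f (y - z))]
    · linarith [abs_nonneg (g (y - z'))]

end Narrow

section LSummand

variable {X X₁ Y : Type*} [NormedAddCommGroup X] [NormedSpace ℝ X]
    [NormedAddCommGroup X₁] [NormedSpace ℝ X₁] [NormedAddCommGroup Y] [NormedSpace ℝ Y]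
    {J : X₁ →L[ℝ] X} {π : X →L[ℝ] X₁}

theorem norm_sub_proj_le_and_le_of_abs_le (hsplit : ∀ u, ‖u‖ = ‖π u‖ + ‖u - J (π u)‖) {y : X₁}
    (hy : ‖y‖ = 1) {g : StrongDual ℝ X₁} (hg : ‖g‖ ≤ 1) (hgy : g y = 1) (f : StrongDual ℝ X₁)
    {δ : ℝ} (hδ : 0 < δ) {z : X} (hz : ‖z‖ = 1)
    (h : |((1 + 2 * ‖f‖ / δ) • g + f) (y - π z)| ≤ δ) :
    ‖z - J (π z)‖ ≤ δ ∧ f (y - π z) ≤ δ := by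
  have hπz : ‖π z‖ + ‖z - J (π z)‖ = 1 := by rw [← hsplit, hz]
  have hgz : ‖z - J (π z)‖ ≤ g (y - π z) := by
    rw [map_sub, hgy]
    linarith [StrongDual.apply_le_norm hg (π z)]
  have hfz : |f (y - π z)| ≤ 2 * ‖f‖ := by
    have : ‖y - π z‖ ≤ 2 := by linarith [norm_sub_le y (π z), norm_nonneg (z - J (π z))]
    rw [← Real.norm_eq_abs, mul_comm]
    exact f.le_of_opNorm_le_of_le le_rfl this
  rw [add_apply, smul_apply, smul_eq_mul] at h
  obtain ⟨hg', hf'⟩ := le_and_le_of_abs_mul_add_le hδ ((norm_nonneg _).trans hgz) hfz h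
  exact ⟨hgz.trans hg', hf'⟩

theorem IsNarrow.comp_of_lSummand (hπJ : ∀ a, π (J a) = a)
    (hsplit : ∀ u, ‖u‖ = ‖π u‖ + ‖u - J (π u)‖) {T : X →L[ℝ] Y} (hT : IsNarrow T) :
    IsNarrow (T.comp J) := by
  have hπ (u : X) : ‖π u‖ ≤ ‖u‖ := by linarith [hsplit u, norm_nonneg (u - J (π u))]
  have hJ (a : X₁) : ‖J a‖ = ‖a‖ := by rw [hsplit, hπJ, sub_self, norm_zero, add_zero]
  refine isNarrow_of_norm_le_one _ fun x y hx hy f ε hε hε1 => ?_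
  set δ := ε / (5 + ‖T‖)
  have hδ : 0 < δ := by positivity
  have hδε : δ * (5 + ‖T‖) = ε := div_mul_cancel₀ _ (by positivity)
  have hδ5 : 5 * δ ≤ ε := by nlinarith [norm_nonneg T]
  have hδ1 : δ ≤ 1 := by linarith
  obtain ⟨g, hg, hgy⟩ := exists_dual_vector'' ℝ y
  rw [hy, RCLike.ofReal_real_eq_id, id] at hgy
  set c := 1 + 2 * ‖f‖ / δ
  obtain ⟨z, z', hz, hz', hfz, hfz', hseg⟩ := hT.exists_segment (by rw [hJ, hx])
    (by rw [hJ, hy]) ((c • g + f).comp π) ((c • g + -f).comp π) hδ hδ1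
  rw [ContinuousLinearMap.comp_apply, map_sub, hπJ] at hfz hfz'
  obtain ⟨hzJ, hfz⟩ := norm_sub_proj_le_and_le_of_abs_le hsplit hy hg hgy f hδ hz hfz
  obtain ⟨hz'J, hfz'⟩ := norm_sub_proj_le_and_le_of_abs_le hsplit hy hg hgy (-f) hδ hz' (by
    simpa only [norm_neg] using hfz')
  rw [neg_apply, neg_le] at hfz'
  obtain ⟨w, hw, hfw⟩ := (convex_segment z z').isPreconnected.exists_abs_le
    (φ := fun w => f (y - π w)) (by fun_prop) (left_mem_segment ℝ z z')
    (right_mem_segment ℝ z z') hδ.le hfz hfz'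
  obtain ⟨hxw, hTw⟩ := hseg w hw
  have hwJ : ‖w - J (π w)‖ ≤ δ := by
    have hS : Convex ℝ ((ContinuousLinearMap.id ℝ X - J.comp π) ⁻¹' Metric.closedBall 0 δ) :=
      (convex_closedBall _ _).linear_preimage (ContinuousLinearMap.id ℝ X - J.comp π).toLinearMap
    simpa using hS.segment_subset (by simpa using hzJ) (by simpa using hz'J) hw
  have hw1 : ‖w‖ ≤ 1 := by
    simpa using (convex_closedBall (0 : X) 1).segment_subset (by simp [hz]) (by simp [hz']) hw
  refine ⟨π w, (hπ w).trans hw1, ?_, ?_⟩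
  · have := norm_add_le (J x + J (π w)) (w - J (π w))
    rw [add_add_sub_cancel, ← map_add, hJ] at this
    linarith
  · have hTJ := T.norm_map_sub_le_add (J y) w (J (π w))
    rw [← map_sub] at hTJ
    rw [ContinuousLinearMap.comp_apply]
    nlinarith [norm_nonneg T]

end LSummand

theorem restrictions_narrow_of_oneSum_general
    {X₁ X₂ Y : Type*}
    [NormedAddCommGroup X₁] [NormedSpace ℝ X₁]
    [NormedAddCommGroup X₂] [NormedSpace ℝ X₂]
    [NormedAddCommGroup Y] [NormedSpace ℝ Y]
    (T : WithLp 1 (X₁ × X₂) →L[ℝ] Y)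
    (T₁ : X₁ →L[ℝ] Y) (T₂ : X₂ →L[ℝ] Y)
    (hT₁ : ∀ x₁ : X₁, T₁ x₁ = T ((WithLp.prodContinuousLinearEquiv 1 ℝ X₁ X₂).symm (x₁, 0)))
    (hT₂ : ∀ x₂ : X₂, T₂ x₂ = T ((WithLp.prodContinuousLinearEquiv 1 ℝ X₁ X₂).symm (0, x₂)))
    (hT : IsNarrow T) :
    IsNarrow T₁ ∧ IsNarrow T₂ := by
  set e := WithLp.prodContinuousLinearEquiv 1 ℝ X₁ X₂
  have h₁ : T₁ = T.comp ((e.symm : X₁ × X₂ →L[ℝ] _).comp (.inl ℝ X₁ X₂)) := by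
    ext; exact hT₁ _
  have h₂ : T₂ = T.comp ((e.symm : X₁ × X₂ →L[ℝ] _).comp (.inr ℝ X₁ X₂)) := by
    ext; exact hT₂ _
  constructor
  · rw [h₁]
    exact hT.comp_of_lSummand (π := (ContinuousLinearMap.fst ℝ X₁ X₂).comp (e : _ →L[ℝ] _))
      (fun _ => rfl) fun u => by simp [WithLp.prod_norm_eq_of_L1, e]
  · rw [h₂]
    exact hT.comp_of_lSummand (π := (ContinuousLinearMap.snd ℝ X₁ X₂).comp (e : _ →L[ℝ] _))
      (fun _ => rfl) fun u => by simp [WithLp.prod_norm_eq_of_L1, e, add_comm]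

theorem restrictions_narrow_of_oneSum
    {X₁ X₂ Y : Type*}
    [NormedAddCommGroup X₁] [NormedSpace ℝ X₁] [CompleteSpace X₁]
    [NormedAddCommGroup X₂] [NormedSpace ℝ X₂] [CompleteSpace X₂]
    [NormedAddCommGroup Y] [NormedSpace ℝ Y] [CompleteSpace Y]
    (T : WithLp 1 (X₁ × X₂) →L[ℝ] Y)
    (T₁ : X₁ →L[ℝ] Y) (T₂ : X₂ →L[ℝ] Y)
    (hT₁ : ∀ x₁ : X₁, T₁ x₁ = T ((WithLp.prodContinuousLinearEquiv 1 ℝ X₁ X₂).symm (x₁, 0)))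
    (hT₂ : ∀ x₂ : X₂, T₂ x₂ = T ((WithLp.prodContinuousLinearEquiv 1 ℝ X₁ X₂).symm (0, x₂)))
    (hT : IsNarrow T) :
    IsNarrow T₁ ∧ IsNarrow T₂ :=
  restrictions_narrow_of_oneSum_general T T₁ T₂ hT₁ hT₂ hT
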